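/- Let G = ℝᵈ ⋊ H with H ≤ O(d), and let k̂ : ℝᵈ × F → Hom(V_ρ, V_σ) satisfy the steerability constraint k̂(a ▸ x, a · f) = σ(a) k̂(x, f) ρ(a)⁻¹ for all a ∈ H, where F is a space with H-action. Define κ(g, f) := k̂(π(g), Λ↓ f) ρ(h(g)) on G, where Λ↓ intertwines the H-actions appropriately (Λ↓(h f) = h · (Λ↓ f)). Then κ satisfies κ(a g a', a f) = σ(a) κ(g, f) ρ(a') for all a, a' ∈ H ⊆ G (identified via a ↦ (0, a)), where π((x,b)) = x and h((x,b)) = b. -/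

import Mathlib

/-- The action of an element of a subgroup `H ≤ O(d)` on `ℝᵈ`. -/
def oAct {d : ℕ} {H : Subgroup (Matrix.orthogonalGroup (Fin d) ℝ)}
    (a : H) (x : Fin d → ℝ) : Fin d → ℝ :=
  ((a : Matrix.orthogonalGroup (Fin d) ℝ) : Matrix (Fin d) (Fin d) ℝ).mulVec x

/-- Multiplication in the semidirect product `G = ℝᵈ ⋊ H`:
`(x,a)(y,b) = (x + a·y, ab)`. -/
def sdMul {d : ℕ} {H : Subgroup (Matrix.orthogonalGroup (Fin d) ℝ)}
    (g g' : (Fin d → ℝ) × H) : (Fin d → ℝ) × H :=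
  (g.1 + oAct g.2 g'.1, g.2 * g'.2)

section SemidirectProduct

variable {d : ℕ} {H : Subgroup (Matrix.orthogonalGroup (Fin d) ℝ)}

@[simp]
theorem oAct_zero (a : H) : oAct a 0 = 0 :=
  Matrix.mulVec_zero _

theorem fst_sdMul_sdMul_zero (a a' : H) (g : (Fin d → ℝ) × H) :
    (sdMul (sdMul (0, a) g) (0, a')).1 = oAct a g.1 := by
  simp [sdMul]

theorem snd_sdMul_sdMul_zero (a a' : H) (g : (Fin d → ℝ) × H) :
    (sdMul (sdMul (0, a) g) (0, a')).2 = a * g.2 * a' :=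
  rfl

end SemidirectProduct

theorem Module.End.comp_inv_comp_mul_mul {H R V W : Type*} [Group H] [Semiring R]
    [AddCommMonoid V] [Module R V] [AddCommMonoid W] [Module R W]
    (ρ : H →* (V →ₗ[R] V)ˣ) (S : W →ₗ[R] W) (K : V →ₗ[R] W) (a b a' : H) :
    (S ∘ₗ K ∘ₗ (↑((ρ a)⁻¹) : V →ₗ[R] V)) ∘ₗ (↑(ρ (a * b * a')) : V →ₗ[R] V)
      = S ∘ₗ (K ∘ₗ (↑(ρ b) : V →ₗ[R] V)) ∘ₗ (↑(ρ a') : V →ₗ[R] V) := by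
  have hρ : ((ρ a)⁻¹ * ρ (a * b * a') : (V →ₗ[R] V)ˣ) = ρ b * ρ a' := by
    rw [← map_inv, ← map_mul, ← map_mul, mul_assoc, inv_mul_cancel_left]
  -- `∘ₗ` is associative on the nose and multiplication in `Module.End` is composition.
  show S ∘ₗ K ∘ₗ (↑((ρ a)⁻¹ * ρ (a * b * a')) : V →ₗ[R] V) = S ∘ₗ K ∘ₗ ↑(ρ b * ρ a')
  rw [hρ]

/-- If `k̂` satisfies the steerability constraint
`k̂(a ▸ x, a·f) = σ(a) k̂(x,f) ρ(a)⁻¹` and `Λ↓` is `H`-equivariant, then the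
lifted kernel `κ(g, f) = k̂(π(g), Λ↓f) ∘ ρ(h(g))` on `G = ℝᵈ ⋊ H` satisfies
`κ(a g a', a·f) = σ(a) ∘ κ(g,f) ∘ ρ(a')` for `a, a' ∈ H` (embedded as `(0,a)`). -/
theorem stmt_16 {d : ℕ} (H : Subgroup (Matrix.orthogonalGroup (Fin d) ℝ))
    {Vρ Vσ F F' : Type*} [AddCommGroup Vρ] [Module ℝ Vρ]
    [AddCommGroup Vσ] [Module ℝ Vσ] [MulAction H F] [MulAction H F']
    (ρ : H →* (Vρ →ₗ[ℝ] Vρ)ˣ) (σ : H →* (Vσ →ₗ[ℝ] Vσ)ˣ)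
    (khat : (Fin d → ℝ) → F → (Vρ →ₗ[ℝ] Vσ))
    (hsteer : ∀ (a : H) (x : Fin d → ℝ) (f : F),
        khat (oAct a x) (a • f)
          = (↑(σ a) : Vσ →ₗ[ℝ] Vσ) ∘ₗ khat x f ∘ₗ (↑((ρ a)⁻¹) : Vρ →ₗ[ℝ] Vρ))
    (lam : F' → F) (hlam : ∀ (a : H) (f : F'), lam (a • f) = a • lam f) :
    ∀ (a a' : H) (g : (Fin d → ℝ) × H) (f : F'),
      khat (sdMul (sdMul ((0 : Fin d → ℝ), a) g) ((0 : Fin d → ℝ), a')).1 (lam (a • f)) ∘ₗ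
          (↑(ρ (sdMul (sdMul ((0 : Fin d → ℝ), a) g) ((0 : Fin d → ℝ), a')).2) : Vρ →ₗ[ℝ] Vρ)
        = (↑(σ a) : Vσ →ₗ[ℝ] Vσ) ∘ₗ
            (khat g.1 (lam f) ∘ₗ (↑(ρ g.2) : Vρ →ₗ[ℝ] Vρ)) ∘ₗ
            (↑(ρ a') : Vρ →ₗ[ℝ] Vρ) := by
  intro a a' g f
  rw [fst_sdMul_sdMul_zero, snd_sdMul_sdMul_zero, hlam, hsteer]
  exact Module.End.comp_inv_comp_mul_mul ρ _ _ a g.2 a'
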